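/- arXiv:2301.02022 — 3 statements merged into one kernel-verified Lean document; each statement's English description precedes it below -/
import Mathlib

section
/- There exists a sequence (r_k)_{k≥2} of polynomials in two variables with rational coefficients such that: each r_k is symmetric in its two variables and homogeneous of degree k − 2; r_2 = 1/8 (constant), r_3(x, y) = (x + y)/8, and r_4(x, y) = (13(x² + y²) + 22xy)/128; and for every h > 0 and all real x, y with |x| < 1/h and |y| < 1/h, the series Σ_{k=2}^∞ r_k(x, y) h^k converges absolutely and Φ(x, y; h) = 1 − (x − y)² · Σ_{k=2}^∞ r_k(x, y) h^k. -/
open MvPolynomial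

/-- `Φ(x, y; h) = √((1 − hx)(1 − hy)) / (1 − h(x + y)/2)`. -/
noncomputable def Phi (x y h : ℝ) : ℝ :=
  Real.sqrt ((1 - h * x) * (1 - h * y)) / (1 - h * (x + y) / 2)

/-!
With `t = h(x + y)/2` and `w = h(x - y)/2` one has `(1 - hx)(1 - hy) = (1 - t)² - w²`, so
`Φ = √(1 - s²)` for `s = w / (1 - t)`. Expand `1 - √(1 - u) = ∑ Cₙ uⁿ⁺¹ / 2^(2n+1)` (Catalan
numbers `Cₙ`) at `u = s²`, and then every `(1 - t)^(-(j+2))` by the negative binomial series. The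
resulting double series in `w` and `t` converges absolutely when `|w| + |t| < 1`, which holds for
`|x|, |y| < 1/h`; grouping it by total degree gives `r_k` as a polynomial in `x - y` and `x + y`,
symmetric because only even powers of `x - y` occur.
-/

open Finset

def sqrtCoeff (n : ℕ) : ℚ := catalan n / 2 ^ (2 * n + 1)

lemma sqrtCoeff_nonneg (n : ℕ) : 0 ≤ sqrtCoeff n := by
  unfold sqrtCoeff; positivity

lemma sqrtCoeff_eq_sub (n : ℕ) :
    sqrtCoeff n = n.centralBinom / 4 ^ n - (n + 1).centralBinom / 4 ^ (n + 1) := by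
  have hcat : ((n + 1 : ℕ) : ℚ) * catalan n = n.centralBinom := by
    exact_mod_cast succ_mul_catalan_eq_centralBinom n
  have hbinom : ((n + 1 : ℕ) : ℚ) * (n + 1).centralBinom = 2 * (2 * n + 1) * n.centralBinom := by
    exact_mod_cast Nat.succ_mul_centralBinom_succ n
  push_cast at hcat hbinom
  have key : 2 * (catalan n : ℚ) = 4 * n.centralBinom - (n + 1).centralBinom := by
    refine mul_left_cancel₀ (by positivity : (n : ℚ) + 1 ≠ 0) ?_
    linear_combination 2 * hcat + hbinom
  have h4 : (4 : ℚ) ^ n = 2 ^ (2 * n) := by rw [pow_mul]; norm_num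
  rw [sqrtCoeff, pow_succ, pow_succ, h4]
  field_simp
  linear_combination 2 * key

lemma sum_range_sqrtCoeff_le_one (N : ℕ) : ∑ n ∈ range N, sqrtCoeff n ≤ 1 := by
  simp only [sqrtCoeff_eq_sub, sum_range_sub', Nat.centralBinom_zero, Nat.cast_one, pow_zero,
    div_one]
  exact sub_le_self _ (by positivity)

lemma sum_antidiagonal_sqrtCoeff_mul (n : ℕ) :
    ∑ p ∈ antidiagonal n, sqrtCoeff p.1 * sqrtCoeff p.2 = 2 * sqrtCoeff (n + 1) := by
  have hterm : ∀ p ∈ antidiagonal n,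
      sqrtCoeff p.1 * sqrtCoeff p.2 = (catalan p.1 * catalan p.2 : ℚ) / 2 ^ (2 * n + 2) := by
    intro p hp
    rw [HasAntidiagonal.mem_antidiagonal] at hp
    rw [sqrtCoeff, sqrtCoeff, div_mul_div_comm, ← pow_add, ← hp]
    ring_nf
  rw [sum_congr rfl hterm, ← sum_div, sqrtCoeff, catalan_succ']
  push_cast
  field_simp
  ring

lemma summable_sqrtCoeff : Summable fun n => (sqrtCoeff n : ℝ) :=
  summable_of_sum_range_le (c := 1) (fun n => by exact_mod_cast sqrtCoeff_nonneg n)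
    (fun N => by exact_mod_cast sum_range_sqrtCoeff_le_one N)

lemma tsum_sqrtCoeff_le_one : ∑' n, (sqrtCoeff n : ℝ) ≤ 1 :=
  Real.tsum_le_of_sum_range_le (c := 1) (fun n => by exact_mod_cast sqrtCoeff_nonneg n)
    (fun N => by exact_mod_cast sum_range_sqrtCoeff_le_one N)

lemma summable_sqrtCoeff_mul_pow {u : ℝ} (h0 : 0 ≤ u) (h1 : u ≤ 1) :
    Summable fun n => (sqrtCoeff n : ℝ) * u ^ n :=
  summable_sqrtCoeff.of_nonneg_of_le
    (fun n => mul_nonneg (by exact_mod_cast sqrtCoeff_nonneg n) (pow_nonneg h0 n))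
    (fun n => mul_le_of_le_one_right (by exact_mod_cast sqrtCoeff_nonneg n) (pow_le_one₀ h0 h1))

/-- `G(u) = ∑ sqrtCoeff n uⁿ` solves `u G² = 2 G - 1`, by the Catalan recursion; of the two roots
`(1 ± √(1 - u)) / u`, the bound `u G(u) ≤ ∑ sqrtCoeff n ≤ 1` selects the minus sign. -/
theorem hasSum_sqrtCoeff_mul_pow_succ {u : ℝ} (h0 : 0 ≤ u) (h1 : u < 1) :
    HasSum (fun n => (sqrtCoeff n : ℝ) * u ^ (n + 1)) (1 - √(1 - u)) := by
  have hG := (summable_sqrtCoeff_mul_pow h0 h1.le).hasSum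
  set G := ∑' n, (sqrtCoeff n : ℝ) * u ^ n
  have hshift : HasSum (fun n => (sqrtCoeff n : ℝ) * u ^ (n + 1)) (u * G) :=
    (hG.mul_left u).congr_fun fun n => by ring
  have hsquare : G * G = ∑' n, 2 * (sqrtCoeff (n + 1) : ℝ) * u ^ n := by
    have hnorm : Summable fun n => ‖(sqrtCoeff n : ℝ) * u ^ n‖ :=
      (summable_sqrtCoeff_mul_pow h0 h1.le).congr fun n => by
        rw [Real.norm_of_nonneg
          (mul_nonneg (by exact_mod_cast sqrtCoeff_nonneg n) (pow_nonneg h0 n))]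
    rw [tsum_mul_tsum_eq_tsum_sum_antidiagonal_of_summable_norm hnorm hnorm]
    refine tsum_congr fun n => ?_
    rw [← Rat.cast_ofNat, ← Rat.cast_mul, ← sum_antidiagonal_sqrtCoeff_mul, Rat.cast_sum, sum_mul]
    refine sum_congr rfl fun p hp => ?_
    rw [HasAntidiagonal.mem_antidiagonal] at hp
    rw [← hp, pow_add]
    push_cast
    ring
  have hquad : u * (G * G) = 2 * G - 1 := by
    have htail := ((hasSum_nat_add_iff' 1).mpr hG).mul_left 2
    have hcoeff0 : (sqrtCoeff 0 : ℝ) = 1 / 2 := by norm_num [sqrtCoeff]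
    simp only [sum_range_one, pow_zero, mul_one, hcoeff0] at htail
    rw [hsquare, ← tsum_mul_left]
    convert htail.tsum_eq using 1
    · exact tsum_congr fun n => by ring
    · ring
  have hle : u * G ≤ 1 :=
    calc u * G = ∑' n, (sqrtCoeff n : ℝ) * u ^ (n + 1) := hshift.tsum_eq.symm
      _ ≤ ∑' n, (sqrtCoeff n : ℝ) :=
        hshift.summable.tsum_le_tsum (fun n => mul_le_of_le_one_right
          (by exact_mod_cast sqrtCoeff_nonneg n) (pow_le_one₀ h0 h1.le)) summable_sqrtCoeff
      _ ≤ 1 := tsum_sqrtCoeff_le_one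
  have hsqrt : √(1 - u) = 1 - u * G := by
    rw [← Real.sqrt_sq (sub_nonneg.mpr hle)]
    congr 1
    linear_combination (-u) * hquad
  rwa [hsqrt, sub_sub_cancel]

def evenSqrtCoeff (j : ℕ) : ℚ := if Even j then sqrtCoeff (j / 2) else 0

lemma evenSqrtCoeff_two_mul (k : ℕ) : evenSqrtCoeff (2 * k) = sqrtCoeff k := by
  simp [evenSqrtCoeff]

lemma evenSqrtCoeff_two_mul_add_one (k : ℕ) : evenSqrtCoeff (2 * k + 1) = 0 := by
  simp [evenSqrtCoeff]

lemma evenSqrtCoeff_nonneg (j : ℕ) : 0 ≤ evenSqrtCoeff j := by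
  obtain ⟨k, rfl | rfl⟩ := Nat.even_or_odd' j
  · rw [evenSqrtCoeff_two_mul]; exact sqrtCoeff_nonneg k
  · rw [evenSqrtCoeff_two_mul_add_one]

theorem hasSum_evenSqrtCoeff_mul_pow {s : ℝ} (hs : |s| < 1) :
    HasSum (fun j => (evenSqrtCoeff j : ℝ) * s ^ (j + 2)) (1 - √(1 - s ^ 2)) := by
  have heven : HasSum (fun k => (evenSqrtCoeff (2 * k) : ℝ) * s ^ (2 * k + 2))
      (1 - √(1 - s ^ 2)) := by
    refine (hasSum_sqrtCoeff_mul_pow_succ (sq_nonneg s) ?_).congr_fun fun k => ?_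
    · rwa [sq_lt_one_iff_abs_lt_one]
    · rw [evenSqrtCoeff_two_mul, ← pow_mul, mul_add, mul_one]
  have hodd : HasSum (fun k => (evenSqrtCoeff (2 * k + 1) : ℝ) * s ^ (2 * k + 1 + 2)) 0 := by
    simp only [evenSqrtCoeff_two_mul_add_one, Rat.cast_zero, zero_mul, hasSum_zero]
  simpa only [add_zero] using
    HasSum.even_add_odd (f := fun j => (evenSqrtCoeff j : ℝ) * s ^ (j + 2)) heven hodd

lemma summable_evenSqrtCoeff : Summable fun j => (evenSqrtCoeff j : ℝ) :=
  Summable.even_add_odd (f := fun j => (evenSqrtCoeff j : ℝ))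
    (by simpa only [evenSqrtCoeff_two_mul] using summable_sqrtCoeff)
    (by simp only [evenSqrtCoeff_two_mul_add_one, Rat.cast_zero]; exact summable_zero)

lemma summable_abs_evenSqrtCoeff_mul_pow {s : ℝ} (h0 : 0 ≤ s) (h1 : s ≤ 1) :
    Summable fun j => |(evenSqrtCoeff j : ℝ)| * s ^ j :=
  summable_evenSqrtCoeff.of_nonneg_of_le (fun j => by positivity) fun j => by
    rw [abs_of_nonneg (by exact_mod_cast evenSqrtCoeff_nonneg j)]
    exact mul_le_of_le_one_right (by exact_mod_cast evenSqrtCoeff_nonneg j) (pow_le_one₀ h0 h1)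

theorem HasSum.sum_antidiagonal {α A : Type*} [AddCommMonoid α] [TopologicalSpace α]
    [RegularSpace α] [ContinuousAdd α] [AddCommMonoid A] [HasAntidiagonal A]
    {f : A × A → α} {a : α} (hf : HasSum f a) : HasSum (fun n => ∑ p ∈ antidiagonal n, f p) a := by
  refine (HasAntidiagonal.sigmaAntidiagonalEquivProd.hasSum_iff.mpr hf).sigma fun n => ?_
  rw [← sum_finset_coe]
  exact hasSum_fintype _

section BinomialSubstitution

variable {a : ℕ → ℝ} {w t : ℝ}

def binomTerm (a : ℕ → ℝ) (w t : ℝ) (p : ℕ × ℕ) : ℝ :=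
  a p.1 * ((p.2 + (p.1 + 1)).choose (p.1 + 1) : ℕ) * w ^ p.1 * t ^ p.2

lemma abs_binomTerm (p : ℕ × ℕ) : |binomTerm a w t p| = binomTerm (|a ·|) |w| |t| p := by
  simp only [binomTerm, abs_mul, abs_pow, Nat.abs_cast]

lemma hasSum_binomTerm_fiber (ht : |t| < 1) (j : ℕ) :
    HasSum (fun m => binomTerm a w t (j, m)) (a j * w ^ j / (1 - t) ^ (j + 2)) := by
  have hgeom := (hasSum_choose_mul_geometric_of_norm_lt_one (j + 1) (r := t)
    (by rwa [Real.norm_eq_abs])).mul_left (a j * w ^ j)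
  rw [show a j * w ^ j / (1 - t) ^ (j + 2) = a j * w ^ j * (1 / (1 - t) ^ (j + 1 + 1)) by ring]
  exact hgeom.congr_fun fun m => by simp only [binomTerm]; ring

lemma summable_abs_binomTerm (ht : |t| < 1)
    (ha : Summable fun j => |a j| * (|w| / (1 - |t|)) ^ j) :
    Summable fun p => |binomTerm a w t p| := by
  have hfiber (j : ℕ) := hasSum_binomTerm_fiber (a := (|a ·|)) (w := |w|) (by rwa [abs_abs]) j
  simp only [abs_binomTerm]
  refine (summable_prod_of_nonneg fun p => by simp only [Pi.zero_apply, binomTerm]; positivity).mpr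
    ⟨fun j => (hfiber j).summable, ?_⟩
  refine (ha.mul_left (1 / (1 - |t|) ^ 2)).congr fun j => ?_
  rw [(hfiber j).tsum_eq, div_pow, pow_add]
  field_simp

theorem hasSum_sum_antidiagonal_binomTerm (ht : |t| < 1)
    (ha : Summable fun j => |a j| * (|w| / (1 - |t|)) ^ j) :
    HasSum (fun k => ∑ p ∈ antidiagonal k, binomTerm a w t p)
      (∑' j, a j * w ^ j / (1 - t) ^ (j + 2)) := by
  have hsum := (summable_abs_binomTerm ht ha).of_abs.hasSum
  rw [(hsum.prod_fiberwise (hasSum_binomTerm_fiber ht)).tsum_eq]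
  exact hsum.sum_antidiagonal

theorem summable_abs_sum_antidiagonal_binomTerm (ht : |t| < 1)
    (ha : Summable fun j => |a j| * (|w| / (1 - |t|)) ^ j) :
    Summable fun k => |∑ p ∈ antidiagonal k, binomTerm a w t p| :=
  (summable_abs_binomTerm ht ha).hasSum.sum_antidiagonal.summable.of_nonneg_of_le
    (fun _ => abs_nonneg _) (fun _ => abs_sum_le_sum_abs _ _)

end BinomialSubstitution

/-- `phiPoly k` is the paper's `r_{k+2}`, written in the variables `x - y` and `x + y`. -/
noncomputable def phiPoly (k : ℕ) : MvPolynomial (Fin 2) ℚ :=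
  ∑ p ∈ antidiagonal k,
    C (evenSqrtCoeff p.1 * (p.2 + (p.1 + 1)).choose (p.1 + 1) / 2 ^ (k + 2)) *
      (X 0 - X 1) ^ p.1 * (X 0 + X 1) ^ p.2

lemma rename_swap_phiPoly (k : ℕ) :
    rename (Equiv.swap (0 : Fin 2) 1) (phiPoly k) = phiPoly k := by
  simp only [phiPoly, map_sum, map_mul, map_pow, map_sub, map_add, rename_C, rename_X,
    Equiv.swap_apply_left, Equiv.swap_apply_right, add_comm (X 1 : MvPolynomial (Fin 2) ℚ)]
  refine sum_congr rfl fun p _ => ?_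
  obtain ⟨i, hi | hi⟩ := Nat.even_or_odd' p.1
  · rw [hi, ← neg_sub, Even.neg_pow (even_two_mul i)]
  · simp [hi, evenSqrtCoeff_two_mul_add_one]

lemma isHomogeneous_phiPoly (k : ℕ) : (phiPoly k).IsHomogeneous k := by
  refine IsHomogeneous.sum _ _ _ fun p hp => ?_
  rw [HasAntidiagonal.mem_antidiagonal] at hp
  rw [show k = 0 + 1 * p.1 + 1 * p.2 by omega]
  exact ((isHomogeneous_C _ _).mul (((isHomogeneous_X ℚ 0).sub (isHomogeneous_X ℚ 1)).pow p.1)).mul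
    (((isHomogeneous_X ℚ 0).add (isHomogeneous_X ℚ 1)).pow p.2)

lemma phiPoly_zero : phiPoly 0 = C (1 / 8) := by
  norm_num [phiPoly, evenSqrtCoeff, sqrtCoeff]

lemma phiPoly_one : phiPoly 1 = C (1 / 8) * (X 0 + X 1) := by
  norm_num [phiPoly, evenSqrtCoeff, sqrtCoeff, Finset.Nat.antidiagonal_succ]

lemma phiPoly_two :
    phiPoly 2 = C (1 / 128) * (13 * (X 0 ^ 2 + X 1 ^ 2) + 22 * X 0 * X 1) := by
  norm_num [phiPoly, evenSqrtCoeff, sqrtCoeff, Finset.Nat.antidiagonal_succ]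
  rw [show (C (3 / 32) : MvPolynomial (Fin 2) ℚ) = C (1 / 128) * 12 by
    rw [← map_ofNat C 12, ← C_mul]; norm_num]
  ring

lemma aeval_phiPoly_mul_pow (x y h : ℝ) (k : ℕ) :
    aeval ![x, y] (phiPoly k) * h ^ (k + 2) = (h / 2) ^ 2 *
      ∑ p ∈ antidiagonal k,
        binomTerm (fun j => (evenSqrtCoeff j : ℝ)) (h * (x - y) / 2) (h * (x + y) / 2) p := by
  rw [phiPoly, map_sum, sum_mul, mul_sum]
  refine sum_congr rfl fun p hp => ?_
  rw [HasAntidiagonal.mem_antidiagonal] at hp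
  simp only [binomTerm, map_mul, map_pow, map_sub, map_add, aeval_X, aeval_C, eq_ratCast,
    Matrix.cons_val_zero, Matrix.cons_val_one, div_pow, mul_pow]
  rw [← hp]
  push_cast
  field_simp
  ring

lemma abs_half_sub_add_abs_half_add_lt_one {a b : ℝ} (ha : |a| < 1) (hb : |b| < 1) :
    |(a - b) / 2| + |(a + b) / 2| < 1 := by
  rw [abs_lt] at ha hb
  rcases abs_cases ((a - b) / 2) with ⟨h₁, -⟩ | ⟨h₁, -⟩ <;>
    rcases abs_cases ((a + b) / 2) with ⟨h₂, -⟩ | ⟨h₂, -⟩ <;> linarith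

lemma Phi_eq_sqrt {x y h : ℝ} (hpos : 0 < 1 - h * (x + y) / 2) :
    Phi x y h = √(1 - (h * (x - y) / 2 / (1 - h * (x + y) / 2)) ^ 2) := by
  have hfactor : (1 - h * x) * (1 - h * y) =
      (1 - h * (x + y) / 2) ^ 2 * (1 - (h * (x - y) / 2 / (1 - h * (x + y) / 2)) ^ 2) := by
    rw [div_pow, mul_one_sub ((1 - h * (x + y) / 2) ^ 2),
      mul_div_cancel₀ _ (pow_ne_zero 2 hpos.ne')]
    ring
  rw [Phi, hfactor, Real.sqrt_mul (sq_nonneg _), Real.sqrt_sq hpos.le,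
    mul_div_cancel_left₀ _ hpos.ne']

theorem summable_and_sq_mul_tsum_binomTerm_evenSqrtCoeff {w t : ℝ} (hwt : |w| + |t| < 1) :
    (Summable fun k =>
      |∑ p ∈ antidiagonal k, binomTerm (fun j => (evenSqrtCoeff j : ℝ)) w t p|) ∧
    w ^ 2 * ∑' k, ∑ p ∈ antidiagonal k, binomTerm (fun j => (evenSqrtCoeff j : ℝ)) w t p =
      1 - √(1 - (w / (1 - t)) ^ 2) := by
  have ht : |t| < 1 := by linarith [abs_nonneg w]
  have hpos : 0 < 1 - t := by linarith [le_abs_self t]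
  have hratio : |w / (1 - t)| < 1 := by
    rw [abs_div, abs_of_pos hpos, div_lt_one hpos]
    linarith [le_abs_self t]
  have ha := summable_abs_evenSqrtCoeff_mul_pow (s := |w| / (1 - |t|))
    (div_nonneg (abs_nonneg w) (by linarith)) ((div_le_one (by linarith)).mpr (by linarith))
  refine ⟨summable_abs_sum_antidiagonal_binomTerm ht ha, ?_⟩
  rw [(hasSum_sum_antidiagonal_binomTerm ht ha).tsum_eq, ← tsum_mul_left,
    ← (hasSum_evenSqrtCoeff_mul_pow hratio).tsum_eq]
  exact tsum_congr fun j => by rw [div_pow w]; ring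

theorem stmt_2 :
    ∃ r : ℕ → MvPolynomial (Fin 2) ℚ,
      (∀ k, 2 ≤ k → rename (Equiv.swap (0 : Fin 2) 1) (r k) = r k) ∧
      (∀ k, 2 ≤ k → (r k).IsHomogeneous (k - 2)) ∧
      r 2 = C (1 / 8) ∧
      r 3 = C (1 / 8) * (X 0 + X 1) ∧
      r 4 = C (1 / 128) * (13 * (X 0 ^ 2 + X 1 ^ 2) + 22 * X 0 * X 1) ∧
      ∀ h : ℝ, 0 < h → ∀ x y : ℝ, |x| < 1 / h → |y| < 1 / h →
        Summable (fun k : ℕ => |(aeval ![x, y] (r (k + 2)) : ℝ) * h ^ (k + 2)|) ∧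
        Phi x y h =
          1 - (x - y) ^ 2 * ∑' k : ℕ, (aeval ![x, y] (r (k + 2)) : ℝ) * h ^ (k + 2) := by
  refine ⟨fun k => phiPoly (k - 2), fun k _ => rename_swap_phiPoly _,
    fun k _ => isHomogeneous_phiPoly _, phiPoly_zero, phiPoly_one, phiPoly_two, ?_⟩
  intro h hh x y hx hy
  simp only [Nat.add_sub_cancel, aeval_phiPoly_mul_pow]
  have habs {z : ℝ} (hz : |z| < 1 / h) : |h * z| < 1 := by
    rwa [abs_mul, abs_of_pos hh, ← lt_div_iff₀' hh]
  have hwt : |h * (x - y) / 2| + |h * (x + y) / 2| < 1 := by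
    convert abs_half_sub_add_abs_half_add_lt_one (habs hx) (habs hy) using 3 <;> ring
  obtain ⟨hsummable, hsum⟩ := summable_and_sq_mul_tsum_binomTerm_evenSqrtCoeff hwt
  refine ⟨(hsummable.mul_left |(h / 2) ^ 2|).congr fun k => (abs_mul _ _).symm, ?_⟩
  have hpos : 0 < 1 - h * (x + y) / 2 := by
    linarith [abs_nonneg (h * (x - y) / 2), le_abs_self (h * (x + y) / 2)]
  rw [Phi_eq_sqrt hpos, tsum_mul_left]
  linear_combination hsum
end

section
/- For every h > 0 and every real x with x < 1/h, the quotient (Φ(x, y; h) − 1)/(x − y)² tends to −(1/8)·(h/(1 − h x))² as y tends to x with y ≠ x (y ranging over reals with y < 1/h). -/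
open Filter

/-! With `s = √(1 - hx)` and `t = √(1 - hy)` one has `Φ = 2st / (s² + t²)`, so
`Φ - 1 = -(s - t)² / (s² + t²)`, while `x - y = (t² - s²) / h`. The factor `(s - t)²` cancels
and `(Φ - 1) / (x - y)² = -h² / ((s² + t²)(s + t)²)`, which is continuous in `y` and equals
`-h² / (8 (1 - hx)²)` at `y = x`. -/

lemma Phi_eq_two_mul_sqrt_mul_sqrt {x y h : ℝ} (hx : 0 ≤ 1 - h * x) :
    Phi x y h = 2 * √(1 - h * x) * √(1 - h * y) / ((1 - h * x) + (1 - h * y)) := by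
  have hden : 1 - h * (x + y) / 2 = ((1 - h * x) + (1 - h * y)) / 2 := by ring
  rw [Phi, Real.sqrt_mul hx, hden, div_div_eq_mul_div]
  ring

lemma two_mul_div_sq_add_sq_sub_one_div_sq {s t : ℝ} (c : ℝ) (hst : s ^ 2 ≠ t ^ 2) :
    (2 * s * t / (s ^ 2 + t ^ 2) - 1) / ((t ^ 2 - s ^ 2) / c) ^ 2
      = -c ^ 2 / ((s ^ 2 + t ^ 2) * (s + t) ^ 2) := by
  have hsum : s ^ 2 + t ^ 2 ≠ 0 := by
    contrapose! hst
    nlinarith [sq_nonneg s, sq_nonneg t]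
  have hsub : s - t ≠ 0 := fun hzero => hst (by rw [sub_eq_zero.1 hzero])
  have hadd : s + t ≠ 0 := fun hzero => hst (by rw [eq_neg_of_add_eq_zero_left hzero, neg_sq])
  rcases eq_or_ne c 0 with rfl | hc
  · simp
  have hdiff : t ^ 2 - s ^ 2 = -((s - t) * (s + t)) := by ring
  rw [hdiff]
  field_simp
  ring

lemma Phi_sub_one_div_sq {x y h : ℝ} (hh : h ≠ 0) (hx : 0 < 1 - h * x) (hy : 0 < 1 - h * y)
    (hxy : y ≠ x) :
    (Phi x y h - 1) / (x - y) ^ 2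
      = -h ^ 2 / (((1 - h * x) + (1 - h * y)) * (√(1 - h * x) + √(1 - h * y)) ^ 2) := by
  have hxy' : x - y = ((1 - h * y) - (1 - h * x)) / h := by field_simp; ring
  rw [Phi_eq_two_mul_sqrt_mul_sqrt hx.le, hxy']
  set s := √(1 - h * x)
  set t := √(1 - h * y)
  have hs : s ^ 2 = 1 - h * x := Real.sq_sqrt hx.le
  have ht : t ^ 2 = 1 - h * y := Real.sq_sqrt hy.le
  have hst : s ^ 2 ≠ t ^ 2 := by
    rw [hs, ht]
    contrapose! hxy
    exact (mul_left_cancel₀ hh (by linarith)).symm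
  rw [← hs, ← ht]
  exact two_mul_div_sq_add_sq_sub_one_div_sq h hst

lemma tendsto_neg_sq_div_add_mul_sqrt_add_sqrt_sq {x h : ℝ} (hx : 0 < 1 - h * x) :
    Tendsto (fun y => -h ^ 2 / (((1 - h * x) + (1 - h * y)) * (√(1 - h * x) + √(1 - h * y)) ^ 2))
      (nhds x) (nhds (-(1 / 8) * (h / (1 - h * x)) ^ 2)) := by
  have hval : -h ^ 2 / (((1 - h * x) + (1 - h * x)) * (√(1 - h * x) + √(1 - h * x)) ^ 2)
      = -(1 / 8) * (h / (1 - h * x)) ^ 2 := by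
    rw [← two_mul, ← two_mul, mul_pow, Real.sq_sqrt hx.le]
    field_simp
    ring
  rw [← hval]
  refine ContinuousAt.tendsto (continuousAt_const.div (by fun_prop) ?_)
  positivity

theorem stmt_3 (h : ℝ) (hh : 0 < h) (x : ℝ) (hx : x < 1 / h) :
    Tendsto (fun y : ℝ => (Phi x y h - 1) / (x - y) ^ 2)
      (nhdsWithin x ({y : ℝ | y < 1 / h} \ {x}))
      (nhds (-(1 / 8) * (h / (1 - h * x)) ^ 2)) := by
  have hpos {z : ℝ} (hz : z < 1 / h) : 0 < 1 - h * z := sub_pos.2 ((lt_div_iff₀' hh).1 hz)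
  refine (tendsto_neg_sq_div_add_mul_sqrt_add_sqrt_sq (hpos hx)).mono_left nhdsWithin_le_nhds
    |>.congr' ?_
  filter_upwards [self_mem_nhdsWithin] with y ⟨hy, hyx⟩
  exact (Phi_sub_one_div_sq hh.ne' (hpos hx) (hpos hy) hyx).symm
end

section
/- Let f be an entire function whose Maclaurin coefficients a_n are all real, and assume: (positivity) there is r₀ > 0 with f(r) > 0 for all real r ≥ r₀; let a(r) := r f′(r)/f(r) and b(r) := r a′(r) for r ≥ r₀; (capture) b(r) → ∞ as r → ∞; (locality) there is a function θ₀ : ℝ → ℝ with 0 < θ₀(r) < π for r ≥ r₀ such that the supremum over real θ with |θ| ≤ θ₀(r) of |f(r e^{iθ}) · e^{−iθ a(r) + θ² b(r)/2} / f(r) − 1| tends to 0 as r → ∞; (decay) the supremum over real θ with θ₀(r) ≤ |θ| ≤ π of √(b(r)) · |f(r e^{iθ})| / f(r) tends to 0 as r → ∞. Then the normal approximation holds uniformly in n: the supremum over n ∈ ℕ of | a_n r^n √(2π b(r)) / f(r) − exp(−(n − a(r))² / (2 b(r))) | tends to 0 as the real variable r tends to ∞. -/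
/-!
By Cauchy's formula `2π aₙ rⁿ = ∫_{-π}^{π} f(re^{iθ}) e^{-inθ} dθ`, while
`√(2π/b) e^{-(n-a)²/(2b)}` is the integral over `ℝ` of the Gaussian `e^{-bθ²/2 + i(a-n)θ}`.
Divided by `f(r)`, the Cauchy integrand is this Gaussian times `1 + o(1)` on the window
`|θ| ≤ θ₀` (locality) and is `o(1/√b)` on `θ₀ ≤ |θ| ≤ π` (decay), and the Gaussian has mass at
most `e^{-bθ₀²/4} √(4π/b)` outside the window. Comparing locality with decay at `θ = θ₀` gives
`e^{-bθ₀²/2} = O(1/√b)`, so all three errors are `o(1/√b)` uniformly in `n`.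
-/

open Real Complex Filter MeasureTheory Set

theorem summable_norm_mul_pow_of_forall_summable {𝕜 : Type*} [RCLike 𝕜] {a : ℕ → 𝕜}
    (h : ∀ z : 𝕜, Summable fun m => a m * z ^ m) (z : 𝕜) :
    Summable fun m => ‖a m * z ^ m‖ := by
  obtain ⟨C, hC⟩ := ((h (2 * z)).tendsto_atTop_zero.norm.bddAbove_range)
  refine .of_nonneg_of_le (fun m => norm_nonneg _) (fun m => ?_)
    ((summable_geometric_two).mul_left C)
  have h2 : ‖a m * z ^ m‖ = ‖a m * (2 * z) ^ m‖ * (1 / 2) ^ m := by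
    have h2m : (2 : ℝ) ^ m * (1 / 2) ^ m = 1 := by rw [← mul_pow]; norm_num
    simp only [norm_mul, norm_pow, RCLike.norm_ofNat]
    linear_combination (-(‖a m‖ * ‖z‖ ^ m)) * h2m
  rw [h2]
  exact mul_le_mul_of_nonneg_right (hC ⟨m, rfl⟩) (by positivity)

theorem hasSum_coeff_mul_pow_mul_cexp {coef : ℕ → ℝ} {f : ℂ → ℂ}
    (hf : ∀ z : ℂ, HasSum (fun n : ℕ => (coef n : ℂ) * z ^ n) (f z)) (r θ : ℝ) :
    HasSum (fun m : ℕ => ((coef m * r ^ m : ℝ) : ℂ) * cexp (m * θ * I))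
      (f (r * cexp (θ * I))) := by
  convert hf (r * cexp (θ * I)) using 2 with m
  rw [mul_pow, ← Complex.exp_nat_mul]
  push_cast; ring_nf

theorem integral_cexp_int_mul_I (k : ℤ) :
    ∫ θ in (-π)..π, cexp (k * θ * I) = if k = 0 then (2 * π : ℂ) else 0 := by
  split_ifs with hk
  · simp [hk]; ring
  have hkI : (k : ℂ) * I ≠ 0 := by simp [hk]
  have hperiod : cexp (k * I * π) = cexp (k * I * (-π : ℝ)) := by
    rw [exp_eq_exp_iff_exp_sub_eq_one, ← exp_int_mul_two_pi_mul_I k]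
    push_cast; ring_nf
  simp_rw [mul_right_comm _ _ I]
  rw [integral_exp_mul_complex hkI, hperiod, sub_self, zero_div]

theorem integral_mul_cexp_neg_eq_of_hasSum {c : ℕ → ℂ} (hc : Summable fun m => ‖c m‖)
    {g : ℝ → ℂ} (hg : ∀ θ : ℝ, HasSum (fun m : ℕ => c m * cexp (m * θ * I)) (g θ)) (n : ℕ) :
    ∫ θ in (-π)..π, g θ * cexp (-(n * θ * I)) = 2 * π * c n := by
  set F : ℕ → ℝ → ℂ := fun m θ => c m * cexp (((m - n : ℤ) * θ : ℝ) * I)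
  have hF : ∀ θ : ℝ, HasSum (F · θ) (g θ * cexp (-(n * θ * I))) := fun θ => by
    have hterm : (fun m : ℕ => c m * cexp (m * θ * I) * cexp (-(n * θ * I))) = (F · θ) := by
      funext m
      rw [mul_assoc, ← Complex.exp_add]
      push_cast [F]; ring_nf
    exact hterm ▸ (hg θ).mul_right _
  have hF_int : ∀ m, ∫ θ in (-π)..π, F m θ = if m = n then 2 * π * c n else 0 := fun m => by
    rw [intervalIntegral.integral_const_mul]
    push_cast
    rw [← Int.cast_natCast m, ← Int.cast_natCast n, ← Int.cast_sub, integral_cexp_int_mul_I]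
    split_ifs <;> simp_all [sub_eq_zero, mul_comm]
  have hsum := hasSum_integral_of_summable_integral_norm (μ := volume.restrict (Ioc (-π) π))
    (F := F) (fun m => (Continuous.integrableOn_Ioc (by fun_prop))) ?_
  · simp_rw [← intervalIntegral.integral_of_le (neg_le_self pi_pos.le), hF_int,
      fun θ => (hF θ).tsum_eq] at hsum
    exact hsum.unique (hasSum_ite_eq n _)
  · simp only [F, norm_mul, norm_exp_ofReal_mul_I, mul_one, integral_const, smul_eq_mul]
    exact hc.mul_left _

theorem continuous_of_hasSum_cexp_mul_I {c : ℕ → ℂ} (hc : Summable fun m => ‖c m‖)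
    {g : ℝ → ℂ} (hg : ∀ θ : ℝ, HasSum (fun m : ℕ => c m * cexp (m * θ * I)) (g θ)) :
    Continuous g := by
  rw [show g = fun θ : ℝ => ∑' m, c m * cexp (m * θ * I) from
    funext fun θ => (hg θ).tsum_eq.symm]
  refine continuous_tsum (fun m => by fun_prop) hc fun m θ => ?_
  rw [norm_mul, ← ofReal_natCast, ← ofReal_mul, norm_exp_ofReal_mul_I, mul_one]

noncomputable def gaussianModel (b ξ θ : ℝ) : ℂ :=
  cexp (((-(b / 2) * θ ^ 2 : ℝ) : ℂ) + ((ξ * θ : ℝ) : ℂ) * I)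

theorem norm_gaussianModel (b ξ θ : ℝ) : ‖gaussianModel b ξ θ‖ = rexp (-(b / 2) * θ ^ 2) := by
  rw [gaussianModel, norm_exp, add_re, ofReal_re, re_ofReal_mul, I_re, mul_zero, add_zero]

theorem norm_gaussianModel_le {b t θ : ℝ} (ξ : ℝ) (hb : 0 ≤ b) (ht : 0 ≤ t) (htθ : t ≤ |θ|) :
    ‖gaussianModel b ξ θ‖ ≤ rexp (-(b * t ^ 2) / 4) * rexp (-(b / 4) * θ ^ 2) := by
  have : t ^ 2 ≤ θ ^ 2 := by simpa only [sq_abs] using pow_le_pow_left₀ ht htθ 2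
  rw [norm_gaussianModel, ← Real.exp_add]
  gcongr
  nlinarith

theorem gaussianModel_eq_quadratic (b ξ θ : ℝ) :
    gaussianModel b ξ θ = cexp (((-(b / 2) : ℝ) : ℂ) * θ ^ 2 + (ξ * I) * θ + 0) := by
  rw [gaussianModel]; push_cast; ring_nf

theorem integrable_gaussianModel {b : ℝ} (ξ : ℝ) (hb : 0 < b) :
    Integrable (gaussianModel b ξ) := by
  simp_rw [funext (gaussianModel_eq_quadratic b ξ)]
  exact integrable_cexp_quadratic' (by simpa using hb) _ _

theorem integral_exp_neg_half_mul_sq {b : ℝ} (hb : 0 < b) :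
    ∫ θ : ℝ, rexp (-(b / 2) * θ ^ 2) = √(2 * π) / √b := by
  rw [integral_gaussian, ← Real.sqrt_div (by positivity)]
  congr 1; field_simp

theorem integral_gaussianModel {b : ℝ} (ξ : ℝ) (hb : 0 < b) :
    ∫ θ : ℝ, gaussianModel b ξ θ = ((√(2 * π) / √b * rexp (-ξ ^ 2 / (2 * b)) : ℝ) : ℂ) := by
  simp_rw [gaussianModel_eq_quadratic]
  have hscale : (π / -((-(b / 2) : ℝ) : ℂ)) ^ (1 / 2 : ℂ) = ((√(2 * π) / √b : ℝ) : ℂ) := by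
    rw [← Real.sqrt_div (by positivity), Real.sqrt_eq_rpow, ofReal_cpow (by positivity)]
    push_cast
    congr 1
    field_simp
  rw [integral_cexp_quadratic (by simpa using hb), hscale, ofReal_mul, ofReal_exp]
  congr 2
  push_cast
  rw [mul_pow, I_sq]
  field_simp
  ring

noncomputable def saddleMajorant (b t₀ ε₁ ε₂ θ : ℝ) : ℝ :=
  ε₁ * rexp (-(b / 2) * θ ^ 2) + (Ioc (-π) π).indicator (fun _ => ε₂ / √b) θ +
    rexp (-(b * t₀ ^ 2) / 4) * rexp (-(b / 4) * θ ^ 2)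

theorem integrable_saddleMajorant {b : ℝ} (t₀ ε₁ ε₂ : ℝ) (hb : 0 < b) :
    Integrable (saddleMajorant b t₀ ε₁ ε₂) :=
  (((integrable_exp_neg_mul_sq (by positivity)).const_mul ε₁).add
    ((integrableOn_const measure_Ioc_lt_top.ne).integrable_indicator measurableSet_Ioc)).add
    ((integrable_exp_neg_mul_sq (by positivity)).const_mul _)

theorem integral_saddleMajorant {b : ℝ} (t₀ ε₁ ε₂ : ℝ) (hb : 0 < b) :
    √b / √(2 * π) * ∫ θ, saddleMajorant b t₀ ε₁ ε₂ θ =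
      ε₁ + √(2 * π) * ε₂ + √2 * rexp (-(b * t₀ ^ 2) / 4) := by
  have h₁ := (integrable_exp_neg_mul_sq (b := b / 2) (by positivity)).const_mul ε₁
  have h₂ := (integrableOn_const (μ := volume) (C := ε₂ / √b)
    measure_Ioc_lt_top.ne).integrable_indicator (measurableSet_Ioc (a := -π) (b := π))
  have h₃ := (integrable_exp_neg_mul_sq (b := b / 4) (by positivity)).const_mul
    (rexp (-(b * t₀ ^ 2) / 4))
  have hquarter : √(π / (b / 4)) = √2 * √(2 * π) / √b := by
    rw [← Real.sqrt_mul zero_le_two, ← Real.sqrt_div (by positivity)]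
    congr 1; field_simp; ring
  unfold saddleMajorant
  rw [integral_add (by exact h₁.add h₂) h₃, integral_add h₁ h₂, integral_const_mul,
    integral_const_mul, integral_indicator_const _ measurableSet_Ioc,
    integral_exp_neg_half_mul_sq hb, integral_gaussian, hquarter,
    Real.volume_real_Ioc_of_le (by linarith [pi_pos]), smul_eq_mul]
  have hp2 : √(2 * π) ^ 2 = 2 * π := Real.sq_sqrt (by positivity)
  field_simp
  linear_combination (-ε₂) * hp2

theorem norm_cexp_phase (A b θ : ℝ) :
    ‖cexp (((-(θ * A) : ℝ) : ℂ) * I + ((θ ^ 2 * b / 2 : ℝ) : ℂ))‖ = rexp (θ ^ 2 * b / 2) := by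
  rw [norm_exp, add_re, re_ofReal_mul, I_re, mul_zero, zero_add, ofReal_re]

theorem cexp_phase_mul_gaussianModel (A b θ : ℝ) (n : ℕ) :
    cexp (((-(θ * A) : ℝ) : ℂ) * I + ((θ ^ 2 * b / 2 : ℝ) : ℂ)) * gaussianModel b (A - n) θ =
      cexp (-(n * θ * I)) := by
  rw [gaussianModel, ← Complex.exp_add]
  push_cast; ring_nf

section SaddlePoint

variable {φ : ℝ → ℂ} {F A b t₀ ε₁ ε₂ : ℝ}

theorem norm_indicator_sub_gaussianModel_le (hF : 0 < F) (hb : 0 < b) (ht₀ : 0 ≤ t₀)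
    (ht₀π : t₀ < π)
    (hloc : ∀ θ : ℝ, |θ| ≤ t₀ →
      ‖φ θ * cexp (((-(θ * A) : ℝ) : ℂ) * I + ((θ ^ 2 * b / 2 : ℝ) : ℂ)) / (F : ℂ) - 1‖ ≤ ε₁)
    (hdec : ∀ θ : ℝ, t₀ ≤ |θ| → |θ| ≤ π → √b * ‖φ θ‖ / F ≤ ε₂) (n : ℕ) (θ : ℝ) :
    ‖(Ioc (-π) π).indicator (fun θ => φ θ * cexp (-(n * θ * I)) / F) θ -
      gaussianModel b (A - n) θ‖ ≤ saddleMajorant b t₀ ε₁ ε₂ θ := by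
  have hε₁ : 0 ≤ ε₁ := (norm_nonneg _).trans (hloc 0 (by simpa using ht₀))
  have hε₂ : 0 ≤ ε₂ := by
    have hπ : t₀ ≤ |π| := by rw [abs_of_pos pi_pos]; exact ht₀π.le
    exact (by positivity : (0 : ℝ) ≤ _).trans (hdec π hπ (abs_of_pos pi_pos).le)
  have hind : 0 ≤ (Ioc (-π) π).indicator (fun _ => ε₂ / √b) θ :=
    indicator_nonneg (fun _ _ => by positivity) θ
  unfold saddleMajorant
  rcases le_or_gt |θ| t₀ with hθ | hθ
  · have hmem : θ ∈ Ioc (-π) π := by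
      obtain ⟨h₁, h₂⟩ := abs_le.1 hθ
      constructor <;> linarith
    have hfactor : φ θ * cexp (-(n * θ * I)) / F - gaussianModel b (A - n) θ =
        (φ θ * cexp (((-(θ * A) : ℝ) : ℂ) * I + ((θ ^ 2 * b / 2 : ℝ) : ℂ)) / F - 1) *
          gaussianModel b (A - n) θ := by
      rw [← cexp_phase_mul_gaussianModel A b θ n]
      ring
    rw [indicator_of_mem hmem, hfactor, norm_mul, norm_gaussianModel]
    calc _ ≤ ε₁ * rexp (-(b / 2) * θ ^ 2) := by gcongr; exact hloc θ hθ
      _ ≤ _ := by rw [add_assoc]; exact le_add_of_nonneg_right (by positivity)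
  · have hψ : ‖(Ioc (-π) π).indicator (fun θ => φ θ * cexp (-(n * θ * I)) / F) θ‖ ≤
        (Ioc (-π) π).indicator (fun _ => ε₂ / √b) θ := by
      by_cases hmem : θ ∈ Ioc (-π) π
      · have hθπ : |θ| ≤ π := abs_le.2 ⟨hmem.1.le, hmem.2⟩
        rw [indicator_of_mem hmem, indicator_of_mem hmem, norm_div, norm_mul, ← ofReal_natCast,
          ← ofReal_mul, ← neg_mul, ← ofReal_neg, norm_exp_ofReal_mul_I, mul_one, norm_real,
          Real.norm_of_nonneg hF.le, le_div_iff₀ (Real.sqrt_pos.2 hb)]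
        have := hdec θ hθ.le hθπ
        rw [div_le_iff₀ hF] at this
        rw [div_mul_eq_mul_div, div_le_iff₀ hF]
        linarith
      · simp [hmem]
    calc _ ≤ _ := norm_sub_le _ _
      _ ≤ _ := add_le_add hψ (norm_gaussianModel_le (A - n) hb.le ht₀ hθ.le)
      _ ≤ _ := by gcongr; exact le_add_of_nonneg_left (by positivity)

theorem abs_coeff_mul_sqrt_div_sub_exp_le {c : ℕ → ℝ} (hc : Summable fun m => |c m|)
    (hφ : ∀ θ : ℝ, HasSum (fun m : ℕ => (c m : ℂ) * cexp (m * θ * I)) (φ θ))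
    (hF : 0 < F) (hb : 0 < b) (ht₀ : 0 ≤ t₀) (ht₀π : t₀ < π)
    (hloc : ∀ θ : ℝ, |θ| ≤ t₀ →
      ‖φ θ * cexp (((-(θ * A) : ℝ) : ℂ) * I + ((θ ^ 2 * b / 2 : ℝ) : ℂ)) / (F : ℂ) - 1‖ ≤ ε₁)
    (hdec : ∀ θ : ℝ, t₀ ≤ |θ| → |θ| ≤ π → √b * ‖φ θ‖ / F ≤ ε₂) (n : ℕ) :
    |c n * √(2 * π * b) / F - rexp (-((n : ℝ) - A) ^ 2 / (2 * b))| ≤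
      ε₁ + √(2 * π) * ε₂ + √2 * rexp (-(b * t₀ ^ 2) / 4) := by
  set ψ := (Ioc (-π) π).indicator (fun θ => φ θ * cexp (-(n * θ * I)) / F)
  have hc' : Summable fun m => ‖(c m : ℂ)‖ := by simpa using hc
  have hψ_int : Integrable ψ :=
    ((continuous_of_hasSum_cexp_mul_I hc' hφ).mul (by fun_prop) |>.div_const _
      |>.integrableOn_Ioc).integrable_indicator measurableSet_Ioc
  have hψ : ∫ θ, ψ θ = 2 * π * c n / F := by
    rw [integral_indicator measurableSet_Ioc, ← intervalIntegral.integral_of_le (by linarith),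
      intervalIntegral.integral_div, integral_mul_cexp_neg_eq_of_hasSum hc' hφ]
  have hrepr : ((c n * √(2 * π * b) / F - rexp (-((n : ℝ) - A) ^ 2 / (2 * b)) : ℝ) : ℂ) =
      ((√b / √(2 * π) : ℝ) : ℂ) * ∫ θ, (ψ θ - gaussianModel b (A - n) θ) := by
    rw [integral_sub hψ_int (integrable_gaussianModel _ hb), hψ, integral_gaussianModel _ hb,
      Real.sqrt_mul (by positivity)]
    have hp2 : ((√(2 * π) : ℝ) : ℂ) ^ 2 = 2 * π := by
      exact_mod_cast Real.sq_sqrt (by positivity : (0 : ℝ) ≤ 2 * π)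
    have hsC : ((√b : ℝ) : ℂ) ≠ 0 := by exact_mod_cast (Real.sqrt_pos.2 hb).ne'
    have hFC : (F : ℂ) ≠ 0 := by exact_mod_cast hF.ne'
    have hexp : (-((n : ℝ) - A) ^ 2 / (2 * b)) = -(A - n) ^ 2 / (2 * b) := by ring
    rw [hexp]
    push_cast
    field_simp
    linear_combination ((c n : ℂ) * (√b : ℂ)) * hp2
  calc _ = ‖((c n * √(2 * π * b) / F - rexp (-((n : ℝ) - A) ^ 2 / (2 * b)) : ℝ) : ℂ)‖ :=
        (norm_real _).symm
    _ = √b / √(2 * π) * ‖∫ θ, (ψ θ - gaussianModel b (A - n) θ)‖ := by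
        rw [hrepr, norm_mul, norm_real, Real.norm_of_nonneg (by positivity)]
    _ ≤ √b / √(2 * π) * ∫ θ, saddleMajorant b t₀ ε₁ ε₂ θ := by
        gcongr
        exact norm_integral_le_of_norm_le (integrable_saddleMajorant _ _ _ hb) (ae_of_all _
          (norm_indicator_sub_gaussianModel_le hF hb ht₀ ht₀π hloc hdec n))
    _ = _ := integral_saddleMajorant _ _ _ hb

end SaddlePoint

theorem sqrt_two_mul_exp_neg_mul_sq_le {φ : ℂ} {F A b t₀ ε₁ ε₂ : ℝ} (hF : 0 < F) (hε₂ : 0 < ε₂)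
    (hb : 1 / ε₂ ^ 2 ≤ b) (hε₁ : ε₁ ≤ 1 / 2)
    (hloc : ‖φ * cexp (((-(t₀ * A) : ℝ) : ℂ) * I + ((t₀ ^ 2 * b / 2 : ℝ) : ℂ)) / (F : ℂ) - 1‖ ≤ ε₁)
    (hdec : √b * ‖φ‖ / F ≤ ε₂) :
    √2 * rexp (-(b * t₀ ^ 2) / 4) ≤ 2 * ε₂ := by
  set E := rexp (t₀ ^ 2 * b / 2)
  have hE : 0 < E := Real.exp_pos _
  have hb' : 1 ≤ ε₂ * √b := by
    rw [← Real.sqrt_sq hε₂.le, ← Real.sqrt_mul (sq_nonneg _)]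
    exact Real.one_le_sqrt.2 (by rwa [div_le_iff₀' (by positivity)] at hb)
  have hlow : 1 / 2 ≤ ‖φ‖ * E / F := by
    have := norm_sub_norm_le (1 : ℂ) (φ * cexp (((-(t₀ * A) : ℝ) : ℂ) * I +
      ((t₀ ^ 2 * b / 2 : ℝ) : ℂ)) / (F : ℂ))
    rw [norm_one, norm_sub_rev, norm_div, norm_mul, norm_cexp_phase, norm_real,
      Real.norm_of_nonneg hF.le] at this
    linarith
  have hup : √b * (‖φ‖ * E / F) ≤ ε₂ * E := by
    rw [← mul_div_assoc, ← mul_assoc, mul_div_right_comm]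
    exact mul_le_mul_of_nonneg_right hdec hE.le
  have hkey : 1 ≤ 2 * ε₂ ^ 2 * E := by nlinarith
  have hsq : rexp (-(b * t₀ ^ 2) / 4) ^ 2 * E = 1 := by
    rw [← Real.exp_nat_mul, ← Real.exp_add]; norm_num; ring_nf
  rw [← Real.sqrt_sq (by positivity : 0 ≤ 2 * ε₂), ← Real.sqrt_sq (Real.exp_pos _).le,
    ← Real.sqrt_mul zero_le_two]
  apply Real.sqrt_le_sqrt
  nlinarith

theorem stmt_10_general (coef : ℕ → ℝ) (f : ℂ → ℂ)
    (hf : ∀ z : ℂ, HasSum (fun n : ℕ => (coef n : ℂ) * z ^ n) (f z))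
    (fr : ℝ → ℝ)
    (r₀ : ℝ) (hpos : ∀ r : ℝ, r₀ ≤ r → 0 < fr r)
    (A B : ℝ → ℝ)
    (hcap : Tendsto B atTop atTop)
    (θ₀ : ℝ → ℝ) (hθ₀ : ∀ r : ℝ, r₀ ≤ r → 0 < θ₀ r ∧ θ₀ r < π)
    (hloc : ∀ ε : ℝ, 0 < ε → ∃ R : ℝ, ∀ r : ℝ, R ≤ r → ∀ θ : ℝ, |θ| ≤ θ₀ r →
      ‖f ((r : ℂ) * Complex.exp ((θ : ℂ) * Complex.I)) *
          Complex.exp (((-(θ * A r) : ℝ) : ℂ) * Complex.I + ((θ ^ 2 * B r / 2 : ℝ) : ℂ)) /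
          ((fr r : ℝ) : ℂ) - 1‖ ≤ ε)
    (hdec : ∀ ε : ℝ, 0 < ε → ∃ R : ℝ, ∀ r : ℝ, R ≤ r → ∀ θ : ℝ, θ₀ r ≤ |θ| → |θ| ≤ π →
      Real.sqrt (B r) * ‖f ((r : ℂ) * Complex.exp ((θ : ℂ) * Complex.I))‖ / fr r ≤ ε) :
    ∀ ε : ℝ, 0 < ε → ∃ R : ℝ, ∀ r : ℝ, R ≤ r → ∀ n : ℕ,
      |coef n * r ^ n * Real.sqrt (2 * π * B r) / fr r -
          Real.exp (-((n : ℝ) - A r) ^ 2 / (2 * B r))| ≤ ε := by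
  intro ε hε
  obtain ⟨R₁, hR₁⟩ := hloc (min (ε / 3) (1 / 2)) (by positivity)
  obtain ⟨R₂, hR₂⟩ := hdec (ε / 9) (by positivity)
  obtain ⟨R₃, hR₃⟩ := eventually_atTop.1 (hcap.eventually_ge_atTop (1 / (ε / 9) ^ 2))
  refine ⟨max (max R₁ R₂) (max R₃ r₀), fun r hr n => ?_⟩
  obtain ⟨⟨hr₁, hr₂⟩, hr₃, hr₀⟩ := by simpa only [max_le_iff] using hr
  obtain ⟨ht₀, ht₀π⟩ := hθ₀ r hr₀
  have hθ₀_abs : |θ₀ r| = θ₀ r := abs_of_pos ht₀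
  have hb : 0 < B r := lt_of_lt_of_le (by positivity) (hR₃ r hr₃)
  have hsum : Summable fun m => |coef m * r ^ m| := by
    simpa using summable_norm_mul_pow_of_forall_summable (fun z => (hf z).summable) (r : ℂ)
  have hest := abs_coeff_mul_sqrt_div_sub_exp_le hsum (hasSum_coeff_mul_pow_mul_cexp hf r)
    (hpos r hr₀) hb ht₀.le ht₀π (hR₁ r hr₁) (hR₂ r hr₂) n
  have htail := sqrt_two_mul_exp_neg_mul_sq_le (hpos r hr₀) (by positivity) (hR₃ r hr₃)
    (min_le_right _ _) (hR₁ r hr₁ (θ₀ r) hθ₀_abs.le) (hR₂ r hr₂ (θ₀ r) hθ₀_abs.ge (by linarith))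
  have hsqrt : √(2 * π) * (ε / 9) ≤ 3 * (ε / 9) := by
    gcongr
    exact Real.sqrt_le_iff.2 ⟨by norm_num, by nlinarith [Real.pi_le_four]⟩
  linarith [min_le_left (ε / 3) (1 / 2)]

/-- Hayman's normal approximation for `H`-admissible entire functions. -/
theorem stmt_10 (coef : ℕ → ℝ) (f : ℂ → ℂ)
    (hf : ∀ z : ℂ, HasSum (fun n : ℕ => (coef n : ℂ) * z ^ n) (f z))
    (fr : ℝ → ℝ) (hfrsum : ∀ r : ℝ, HasSum (fun n : ℕ => coef n * r ^ n) (fr r))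
    (r₀ : ℝ) (hr₀ : 0 < r₀) (hpos : ∀ r : ℝ, r₀ ≤ r → 0 < fr r)
    (A B : ℝ → ℝ)
    (hA : ∀ r : ℝ, A r = r * deriv fr r / fr r)
    (hB : ∀ r : ℝ, B r = r * deriv A r)
    (hcap : Tendsto B atTop atTop)
    (θ₀ : ℝ → ℝ) (hθ₀ : ∀ r : ℝ, r₀ ≤ r → 0 < θ₀ r ∧ θ₀ r < π)
    (hloc : ∀ ε : ℝ, 0 < ε → ∃ R : ℝ, ∀ r : ℝ, R ≤ r → ∀ θ : ℝ, |θ| ≤ θ₀ r →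
      ‖f ((r : ℂ) * Complex.exp ((θ : ℂ) * Complex.I)) *
          Complex.exp (((-(θ * A r) : ℝ) : ℂ) * Complex.I + ((θ ^ 2 * B r / 2 : ℝ) : ℂ)) /
          ((fr r : ℝ) : ℂ) - 1‖ ≤ ε)
    (hdec : ∀ ε : ℝ, 0 < ε → ∃ R : ℝ, ∀ r : ℝ, R ≤ r → ∀ θ : ℝ, θ₀ r ≤ |θ| → |θ| ≤ π →
      Real.sqrt (B r) * ‖f ((r : ℂ) * Complex.exp ((θ : ℂ) * Complex.I))‖ / fr r ≤ ε) :
    ∀ ε : ℝ, 0 < ε → ∃ R : ℝ, ∀ r : ℝ, R ≤ r → ∀ n : ℕ,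
      |coef n * r ^ n * Real.sqrt (2 * π * B r) / fr r -
          Real.exp (-((n : ℝ) - A r) ^ 2 / (2 * B r))| ≤ ε :=
  stmt_10_general coef f hf fr r₀ hpos A B hcap θ₀ hθ₀ hloc hdec
end
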